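/- Let D be a metric on ℂ inducing the Euclidean topology. Assume: (a) for every r > 0 there exists R > r such that any two D-geodesics from points of B_r(0) to ∞ have the same image in ℂ ∖ B_R(0); (b) for every R > 0 there exists z ∈ ℂ ∖ closure(B_R(0)) such that for every point w ∈ ℂ and every D-geodesic σ from w to ∞ whose image intersects B_R(0) there is a D-geodesic σ̃ from w to z with σ(t) = σ̃(t) for every t ≥ 0 such that σ(t) ∈ B_R(0), and such that for every q ∈ Z_z there is exactly one D-geodesic from z to q. Then for every p ∈ Z_∞ there is exactly one D-geodesic from p to ∞. -/
import Mathlib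


open Set Metric Filter

noncomputable section

/-- `D` is a metric on `ℂ`. -/
structure IsMetricOn (D : ℂ → ℂ → ℝ) : Prop where
  self_dist : ∀ x, D x x = 0
  eq_of_dist_eq_zero : ∀ x y, D x y = 0 → x = y
  symm : ∀ x y, D x y = D y x
  triangle : ∀ x y z, D x z ≤ D x y + D y z

/-- `D` induces the Euclidean topology on `ℂ`. -/
def InducesEuclTop (D : ℂ → ℂ → ℝ) : Prop :=
  (∀ z : ℂ, ∀ ε > (0:ℝ), ∃ δ > (0:ℝ), ∀ w, dist z w < δ → D z w < ε) ∧
  (∀ z : ℂ, ∀ ε > (0:ℝ), ∃ δ > (0:ℝ), ∀ w, D z w < δ → dist z w < ε)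

/-- The open `D`-ball `𝓑_t(z)`. -/
def DBall (D : ℂ → ℂ → ℝ) (z : ℂ) (t : ℝ) : Set ℂ := {w | D z w < t}

/-- A `D`-geodesic from `z` to `w`: a continuous map `σ : [0, D(z,w)] → ℂ` with `σ 0 = z`,
`σ (D z w) = w` and `D (σ t) (σ s) = s - t` for `0 ≤ t ≤ s ≤ D z w`. -/
def IsDGeodesic (D : ℂ → ℂ → ℝ) (z w : ℂ) (σ : ℝ → ℂ) : Prop :=
  σ 0 = z ∧ σ (D z w) = w ∧ ContinuousOn σ (Set.Icc 0 (D z w)) ∧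
    ∀ t s : ℝ, 0 ≤ t → t ≤ s → s ≤ D z w → D (σ t) (σ s) = s - t

/-- A `D`-geodesic from `w` to `∞`: a continuous map `σ : [0,∞) → ℂ` with `σ 0 = w` and
`D (σ t) (σ s) = s - t` for all `0 ≤ t ≤ s`. -/
def IsDGeodesicToInfty (D : ℂ → ℂ → ℝ) (w : ℂ) (σ : ℝ → ℂ) : Prop :=
  σ 0 = w ∧ ContinuousOn σ (Set.Ici 0) ∧
    ∀ t s : ℝ, 0 ≤ t → t ≤ s → D (σ t) (σ s) = s - t

/-- The `D`-geodesic tree `Z_z` rooted at `z`. -/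
def geoTree (D : ℂ → ℂ → ℝ) (z : ℂ) : Set ℂ :=
  {p | ∃ (w : ℂ) (σ : ℝ → ℂ) (t : ℝ), IsDGeodesic D z w σ ∧ 0 ≤ t ∧ t < D z w ∧ σ t = p}

/-- The `D`-geodesic tree `Z_∞` rooted at `∞`. -/
def geoTreeInfty (D : ℂ → ℂ → ℝ) : Set ℂ :=
  {p | ∃ (w : ℂ) (σ : ℝ → ℂ) (t : ℝ), IsDGeodesicToInfty D w σ ∧ 0 < t ∧ σ t = p}

/-- There is exactly one `D`-geodesic from `z` to `x` (it exists, and any two agree on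
`[0, D(z,x)]`). -/
def UniqueGeodesic (D : ℂ → ℂ → ℝ) (z x : ℂ) : Prop :=
  (∃ σ, IsDGeodesic D z x σ) ∧
    ∀ σ σ', IsDGeodesic D z x σ → IsDGeodesic D z x σ' →
      Set.EqOn σ σ' (Set.Icc 0 (D z x))


lemma IsMetricOn.nonneg {D : ℂ → ℂ → ℝ} (hD : IsMetricOn D) (x y : ℂ) : 0 ≤ D x y := by
  have h := hD.triangle x y x
  rw [hD.self_dist, hD.symm y x] at h
  linarith

lemma shift_geo {D : ℂ → ℂ → ℝ} {w : ℂ} {σ : ℝ → ℂ} (h : IsDGeodesicToInfty D w σ)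
    {u : ℝ} (hu : 0 ≤ u) : IsDGeodesicToInfty D (σ u) (fun s => σ (s + u)) := by
  refine ⟨by simp, ?_, ?_⟩
  · exact h.2.1.comp ((continuous_add_right u).continuousOn)
      (fun s hs => by simp only [mem_Ici] at hs ⊢; linarith)
  · intro t s ht hts
    have := h.2.2 (t + u) (s + u) (by linarith) (by linarith)
    simpa using this

lemma reverse_geo {D : ℂ → ℂ → ℝ} (hD : IsMetricOn D) {a b : ℂ} {σ : ℝ → ℂ}
    (h : IsDGeodesic D a b σ) : IsDGeodesic D b a (fun s => σ (D a b - s)) := by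
  have hba : D b a = D a b := hD.symm b a
  refine ⟨by simpa using h.2.1, by simp [hba, h.1], ?_, ?_⟩
  · exact h.2.2.1.comp ((continuous_const.sub continuous_id).continuousOn)
      (fun s hs => by simp only [mem_Icc, hba] at hs ⊢; constructor <;> linarith [hs.1, hs.2])
  · intro t s ht hts hs
    rw [hba] at hs
    have h1 := h.2.2.2 (D a b - s) (D a b - t) (by linarith) (by linarith) (by linarith)
    have h2 := hD.symm (σ (D a b - t)) (σ (D a b - s))
    simp only []
    linarith

/-- Unique geodesics to `∞` in `Z_∞`.
Assume `D` induces the Euclidean topology and: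
(a) for every `r > 0` there is `R > r` such that any two `D`-geodesics from points of `B_r(0)`
to `∞` have the same image in `ℂ ∖ B_R(0)`;
(b) for every `R > 0` there is `z ∉ closure B_R(0)` such that every `D`-geodesic `σ` to `∞`
whose image meets `B_R(0)` agrees inside `B_R(0)` with some `D`-geodesic from its starting
point to `z`, and geodesics from `z` to points of `Z_z` are unique.
Then every `p ∈ Z_∞` has exactly one `D`-geodesic to `∞`. -/
theorem statement_11 (D : ℂ → ℂ → ℝ) (hD : IsMetricOn D) (htop : InducesEuclTop D)
    (ha : ∀ r > (0:ℝ), ∃ R > r, ∀ (w w' : ℂ) (σ σ' : ℝ → ℂ),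
      w ∈ Metric.ball (0:ℂ) r → w' ∈ Metric.ball (0:ℂ) r →
      IsDGeodesicToInfty D w σ → IsDGeodesicToInfty D w' σ' →
      σ '' Set.Ici 0 \ Metric.ball (0:ℂ) R = σ' '' Set.Ici 0 \ Metric.ball (0:ℂ) R)
    (hb : ∀ R > (0:ℝ), ∃ z : ℂ, z ∉ closure (Metric.ball (0:ℂ) R) ∧
      (∀ (w : ℂ) (σ : ℝ → ℂ), IsDGeodesicToInfty D w σ →
        (σ '' Set.Ici 0 ∩ Metric.ball (0:ℂ) R).Nonempty →
        ∃ σ' : ℝ → ℂ, IsDGeodesic D w z σ' ∧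
          ∀ t : ℝ, 0 ≤ t → σ t ∈ Metric.ball (0:ℂ) R → σ t = σ' t) ∧
      (∀ q ∈ geoTree D z, UniqueGeodesic D z q)) :
    ∀ p ∈ geoTreeInfty D,
      (∃ σ, IsDGeodesicToInfty D p σ) ∧
      ∀ σ σ' : ℝ → ℂ, IsDGeodesicToInfty D p σ → IsDGeodesicToInfty D p σ' →
        Set.EqOn σ σ' (Set.Ici 0) := by
  intro p hp
  obtain ⟨w0, σ₀, t₀, hσ₀, ht₀, hpt₀⟩ := hp
  have hbar : IsDGeodesicToInfty D p (fun s => σ₀ (s + t₀)) := by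
    rw [← hpt₀]; exact shift_geo hσ₀ ht₀.le
  refine ⟨⟨_, hbar⟩, ?_⟩
  intro σ σ' hσ hσ' t ht
  rw [mem_Ici] at ht
  have hr1 : (0:ℝ) < ‖p‖ + 1 := by positivity
  obtain ⟨R₁, hR₁, hA₁⟩ := ha (‖p‖ + 1) hr1
  obtain ⟨R₂, hR₂, hA₂⟩ := ha R₁ (hr1.trans hR₁)
  obtain ⟨z, hz, hmatch, huniq⟩ := hb R₂ (hr1.trans (hR₁.trans hR₂))
  have hpB : p ∈ ball (0:ℂ) (‖p‖ + 1) := by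
    rw [mem_ball_zero_iff]; linarith
  have hpR₁ : p ∈ ball (0:ℂ) R₁ := ball_subset_ball hR₁.le hpB
  have hpR₂ : p ∈ ball (0:ℂ) R₂ := ball_subset_ball hR₂.le hpR₁
  have hzR₂ : z ∉ ball (0:ℂ) R₂ := fun h => hz (subset_closure h)
  have hL : 0 < D p z := by
    rcases (hD.nonneg p z).lt_or_eq with h | h
    · exact h
    · exact absurd ((hD.eq_of_dist_eq_zero p z h.symm) ▸ hpR₂) hzR₂
  have dLem : ∀ τ : ℝ → ℂ, IsDGeodesicToInfty D p τ → ∀ s, 0 ≤ s → D p (τ s) = s := by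
    intro τ hτ s hs
    have := hτ.2.2 0 s le_rfl hs
    rwa [hτ.1, sub_zero] at this
  -- Claim A: a geodesic from p stays in B_{R₂} up to any time at which it is in B_{R₁}
  have claimA : ∀ τ : ℝ → ℂ, IsDGeodesicToInfty D p τ → ∀ t₁, 0 ≤ t₁ → τ t₁ ∈ ball (0:ℂ) R₁ →
      ∀ s, 0 ≤ s → s ≤ t₁ → τ s ∈ ball (0:ℂ) R₂ := by
    intro τ hτ t₁ ht₁ htb s hs hst
    by_contra hsB
    have hset := hA₂ p (τ t₁) τ (fun u => τ (u + t₁)) hpR₁ htb hτ (shift_geo hτ ht₁)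
    have hmem : τ s ∈ τ '' Ici 0 \ ball (0:ℂ) R₂ := ⟨⟨s, hs, rfl⟩, hsB⟩
    rw [hset] at hmem
    obtain ⟨⟨u, hu, huv⟩, -⟩ := hmem
    rw [mem_Ici] at hu
    have d1 : D p (τ s) = s := dLem τ hτ s hs
    have d2 : D p (τ (u + t₁)) = u + t₁ := dLem τ hτ (u + t₁) (by linarith)
    simp only [] at huv
    rw [huv] at d2
    have hst' : s = t₁ := by linarith [d1 ▸ d2]
    exact hsB (ball_subset_ball hR₂.le (hst' ▸ htb))
  -- Claim B: if a geodesic from p is in B_{R₁} at time t, then t < D p z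
  have claimB : ∀ τ : ℝ → ℂ, IsDGeodesicToInfty D p τ → ∀ t₁, 0 ≤ t₁ → τ t₁ ∈ ball (0:ℂ) R₁ →
      t₁ < D p z := by
    intro τ hτ t₁ ht₁ htb
    obtain ⟨ρ, hρ, hρm⟩ := hmatch p τ hτ ⟨p, ⟨0, self_mem_Ici, hτ.1⟩, hpR₂⟩
    by_contra hle
    push_neg at hle
    have h1 : τ (D p z) ∈ ball (0:ℂ) R₂ := claimA τ hτ t₁ ht₁ htb (D p z) (hD.nonneg p z) hle
    have h2 := hρm (D p z) (hD.nonneg p z) h1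
    rw [h2, hρ.2.1] at h1
    exact hzR₂ h1
  -- p is in the geodesic tree of z
  have hpZ : p ∈ geoTree D z := by
    set t₁ := min t₀ (D p z / 3) with ht₁def
    have ht₁pos : 0 < t₁ := lt_min ht₀ (by linarith)
    have ht₁t₀ : t₁ ≤ t₀ := min_le_left _ _
    have ht₁L : t₁ ≤ D p z / 3 := min_le_right _ _
    have hσt : IsDGeodesicToInfty D (σ₀ (t₀ - t₁)) (fun s => σ₀ (s + (t₀ - t₁))) :=
      shift_geo hσ₀ (by linarith)
    have hσtp : (fun s => σ₀ (s + (t₀ - t₁))) t₁ = p := by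
      simp only []; rw [show t₁ + (t₀ - t₁) = t₀ by ring, hpt₀]
    obtain ⟨ρ₀, hρ₀, hρ₀m⟩ := hmatch (σ₀ (t₀ - t₁)) _ hσt ⟨p, ⟨t₁, ht₁pos.le, hσtp⟩, hpR₂⟩
    have hpm : p = ρ₀ t₁ := by
      rw [← hσtp]; exact hρ₀m t₁ ht₁pos.le (by rw [show t₁ + (t₀ - t₁) = t₀ by ring, hpt₀]; exact hpR₂)
    have hwp : D p (σ₀ (t₀ - t₁)) = t₁ := by
      have := hσt.2.2 0 t₁ le_rfl ht₁pos.le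
      rw [hσt.1, hσtp, sub_zero] at this
      rw [hD.symm]; exact this
    have hM : t₁ < D (σ₀ (t₀ - t₁)) z := by
      have htri := hD.triangle p (σ₀ (t₀ - t₁)) z
      linarith
    refine ⟨σ₀ (t₀ - t₁), fun s => ρ₀ (D (σ₀ (t₀ - t₁)) z - s), D (σ₀ (t₀ - t₁)) z - t₁,
      reverse_geo hD hρ₀, by linarith, ?_, ?_⟩
    · rw [hD.symm z (σ₀ (t₀ - t₁))]; linarith
    · simp only [sub_sub_cancel]; exact hpm.symm
  obtain ⟨-, huq⟩ := huniq p hpZ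
  -- if a geodesic is outside B_{R₁} at time t, the two agree there
  have outside : ∀ τ τ' : ℝ → ℂ, IsDGeodesicToInfty D p τ → IsDGeodesicToInfty D p τ' →
      τ t ∉ ball (0:ℂ) R₁ → τ t = τ' t := by
    intro τ τ' hτ hτ' hout
    have hset := hA₁ p p τ τ' hpB hpB hτ hτ'
    have hmem : τ t ∈ τ '' Ici 0 \ ball (0:ℂ) R₁ := ⟨⟨t, ht, rfl⟩, hout⟩
    rw [hset] at hmem
    obtain ⟨⟨s, hs, hsv⟩, -⟩ := hmem
    rw [mem_Ici] at hs
    have d1 : D p (τ t) = t := dLem τ hτ t ht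
    have d2 : D p (τ' s) = s := dLem τ' hτ' s hs
    rw [hsv] at d2
    have : s = t := by rw [← d2, d1]
    rw [← hsv, this]
  by_cases h1 : σ t ∈ ball (0:ℂ) R₁
  · by_cases h2 : σ' t ∈ ball (0:ℂ) R₁
    · obtain ⟨ρ, hρ, hρm⟩ := hmatch p σ hσ ⟨p, ⟨0, self_mem_Ici, hσ.1⟩, hpR₂⟩
      obtain ⟨ρ', hρ', hρ'm⟩ := hmatch p σ' hσ' ⟨p, ⟨0, self_mem_Ici, hσ'.1⟩, hpR₂⟩
      have e1 : σ t = ρ t := hρm t ht (claimA σ hσ t ht h1 t ht le_rfl)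
      have e2 : σ' t = ρ' t := hρ'm t ht (claimA σ' hσ' t ht h2 t ht le_rfl)
      have htL : t < D p z := claimB σ hσ t ht h1
      have hmem : D p z - t ∈ Icc (0:ℝ) (D z p) := by
        rw [hD.symm z p]; exact ⟨by linarith, by linarith⟩
      have heq := huq _ _ (reverse_geo hD hρ) (reverse_geo hD hρ') hmem
      simp only [sub_sub_cancel] at heq
      rw [e1, e2, heq]
    · exact (outside σ' σ hσ' hσ h2).symm
  · exact outside σ σ' hσ hσ' h1
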